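/- arXiv:2404.07480 — 4 statements merged into one kernel-verified Lean document; each statement's English description precedes it below -/
import Mathlib

section
/- Let A_k be a real n × n^{k−1} matrix with k ≥ 2, let f_k(x) = A_k x^{[k−1]} and g(x) = C x with C a real m × n matrix. Then for every j ≥ 2 and every x ∈ ℝⁿ, the j-th Lie derivative satisfies L_{f_k}^j g(x) = C A_k B̄_{k2} B̄_{k3} ⋯ B̄_{kj} x^{[jk−(2j−1)]}, where for each p ≥ 2, B̄_{kp} = Σ_{i=1}^{(p−1)k−(2p−3)} I ⊗ ⋯ ⊗ A_k ⊗ ⋯ ⊗ I is the sum over i = 1, …, (p−1)k−(2p−3) of Kronecker products of (p−1)k−(2p−3) factors in which A_k occupies the i-th factor and all other factors are the n × n identity matrix I. -/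
open Matrix BigOperators

noncomputable section

/-- Kronecker product of (column) vectors. -/
def vkron {a b : ℕ} (u : Fin a → ℝ) (v : Fin b → ℝ) : Fin (a * b) → ℝ :=
  fun i => u (finProdFinEquiv.symm i).1 * v (finProdFinEquiv.symm i).2

/-- Cast a vector along an equality of dimensions. -/
def castV {a b : ℕ} (h : a = b) (v : Fin a → ℝ) : Fin b → ℝ :=
  fun i => v (Fin.cast h.symm i)

/-- `vpow x m = x ⊗ x ⊗ ⋯ ⊗ x` (`m` factors), the `m`-fold Kronecker power. -/
def vpow {n : ℕ} (x : Fin n → ℝ) : (m : ℕ) → Fin (n ^ m) → ℝ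
  | 0 => fun _ => 1
  | m + 1 => castV (pow_succ' n m).symm (vkron x (vpow x m))

/-- Kronecker product of matrices. -/
def mkron {a b c d : ℕ} (A : Matrix (Fin a) (Fin b) ℝ) (B : Matrix (Fin c) (Fin d) ℝ) :
    Matrix (Fin (a * c)) (Fin (b * d)) ℝ :=
  fun i j =>
    A (finProdFinEquiv.symm i).1 (finProdFinEquiv.symm j).1 *
      B (finProdFinEquiv.symm i).2 (finProdFinEquiv.symm j).2

/-- Cast a matrix along equalities of dimensions. -/
def castM {a b a' b' : ℕ} (ha : a = a') (hb : b = b')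
    (M : Matrix (Fin a) (Fin b) ℝ) : Matrix (Fin a') (Fin b') ℝ :=
  fun i j => M (Fin.cast ha.symm i) (Fin.cast hb.symm j)

/-- `Bmat k N hk A = Σ_{i=1}^{N} I^{⊗(i-1)} ⊗ A ⊗ I^{⊗(N-i)}`, where `A` is `n × n^(k-1)`
and `I` is the `n × n` identity; the result is an `n^N × n^(N+k-2)` matrix. -/
def Bmat {n : ℕ} (k N : ℕ) (hk : 2 ≤ k) (A : Matrix (Fin n) (Fin (n ^ (k - 1))) ℝ) :
    Matrix (Fin (n ^ N)) (Fin (n ^ (N + k - 2))) ℝ :=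
  ∑ i : Fin N,
    castM (by have := i.isLt; rw [← pow_succ', ← pow_add]; congr 1; omega)
      (by have := i.isLt; have := hk; rw [← pow_add, ← pow_add]; congr 1; omega)
      (mkron (1 : Matrix (Fin (n ^ (i : ℕ))) (Fin (n ^ (i : ℕ))) ℝ)
        (mkron A (1 : Matrix (Fin (n ^ (N - 1 - (i : ℕ)))) (Fin (n ^ (N - 1 - (i : ℕ)))) ℝ)))

/-- Lie derivative of an output map along a vector field. -/
def lieD {n m : ℕ} (f : (Fin n → ℝ) → Fin n → ℝ) (φ : (Fin n → ℝ) → Fin m → ℝ) :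
    (Fin n → ℝ) → Fin m → ℝ :=
  fun x => fderiv ℝ φ x (f x)

/-- Iterated Lie derivative `L_f^j φ`. -/
def lieIter {n m : ℕ} (f : (Fin n → ℝ) → Fin n → ℝ) (φ : (Fin n → ℝ) → Fin m → ℝ) :
    ℕ → (Fin n → ℝ) → Fin m → ℝ
  | 0 => φ
  | j + 1 => lieD f (lieIter f φ j)

/-- The product `B̄_{k2} B̄_{k3} ⋯ B̄_{k(j+1)}` of the matrices from (eq. B), as an
`n^(k-1) × n^((j+1)k-(2(j+1)-1))` matrix (`Bchain k hk A 0` is the empty product). -/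
def Bchain {n : ℕ} (k : ℕ) (hk : 2 ≤ k) (A : Matrix (Fin n) (Fin (n ^ (k - 1))) ℝ) :
    (j : ℕ) → Matrix (Fin (n ^ (k - 1))) (Fin (n ^ ((j + 1) * k - (2 * (j + 1) - 1)))) ℝ
  | 0 => castM rfl (by congr 1; omega)
      (1 : Matrix (Fin (n ^ (k - 1))) (Fin (n ^ (k - 1))) ℝ)
  | j + 1 =>
      castM rfl
        (by
          congr 1
          have h2 : (j + 1 + 1) * k = (j + 1) * k + k := by ring
          have h3 : (j + 1) * 2 ≤ (j + 1) * k := Nat.mul_le_mul (le_refl (j + 1)) hk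
          omega)
        (Bchain k hk A j * Bmat k ((j + 1) * k - (2 * (j + 1) - 1)) hk A)

section Lemmas

@[simp] lemma castV_rfl {a : ℕ} (v : Fin a → ℝ) : castV rfl v = v := rfl

lemma castV_castV {a b c : ℕ} (h1 : a = b) (h2 : b = c) (v : Fin a → ℝ) :
    castV h2 (castV h1 v) = castV (h1.trans h2) v := rfl

lemma castV_eq_iff {a a' c : ℕ} (h1 : a = c) (h2 : a' = c) (u : Fin a → ℝ) (v : Fin a' → ℝ) :
    castV h1 u = castV h2 v ↔ u = castV (h2.trans h1.symm) v := by
  subst h1; exact Iff.rfl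

lemma vkron_apply {a b : ℕ} (u : Fin a → ℝ) (v : Fin b → ℝ) (i : Fin (a * b)) :
    vkron u v i = u i.divNat * v i.modNat := rfl

lemma vkron_val {a b : ℕ} (u : Fin a → ℝ) (v : Fin b → ℝ) (i : Fin (a * b))
    (p : ℕ) (hp : p < a) (q : ℕ) (hq : q < b) (hi : (i : ℕ) = p * b + q) :
    vkron u v i = u ⟨p, hp⟩ * v ⟨q, hq⟩ := by
  have hb : 0 < b := by omega
  rw [vkron_apply]
  congr 1
  · congr 1; ext
    simp [Fin.divNat, hi, Nat.mul_comm p b, Nat.mul_add_div hb, Nat.div_eq_of_lt hq]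
  · congr 1; ext
    simp only [Fin.modNat, hi]
    rw [Nat.mul_comm p b, Nat.mul_add_mod, Nat.mod_eq_of_lt hq]

end Lemmas
section Lemmas2

lemma castV_self {a : ℕ} (h : a = a) (v : Fin a → ℝ) : castV h v = v := rfl

lemma castV_vpow {n : ℕ} (x : Fin n → ℝ) {a b : ℕ} (hab : a = b) (h : n ^ a = n ^ b) :
    castV h (vpow x a) = vpow x b := by subst hab; rfl

lemma vpow_congr {n : ℕ} (x : Fin n → ℝ) {a b : ℕ} (h : a = b) :
    vpow x b = castV (congrArg (n ^ ·) h) (vpow x a) := by subst h; rfl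

lemma vkron_castV_left {a a' b : ℕ} (h : a = a') (u : Fin a → ℝ) (v : Fin b → ℝ) :
    vkron (castV h u) v = castV (by rw [h]) (vkron u v) := by subst h; rfl

lemma vkron_castV_right {a b b' : ℕ} (h : b = b') (u : Fin a → ℝ) (v : Fin b → ℝ) :
    vkron u (castV h v) = castV (by rw [h]) (vkron u v) := by subst h; rfl

lemma vkron_assoc {a b c : ℕ} (u : Fin a → ℝ) (v : Fin b → ℝ) (w : Fin c → ℝ) :
    vkron (vkron u v) w = castV (mul_assoc a b c).symm (vkron u (vkron v w)) := by
  funext i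
  show (vkron u v) i.divNat * w i.modNat = _
  show _ = (vkron u (vkron v w)) (Fin.cast (mul_assoc a b c) i)
  rw [vkron_apply, vkron_apply, vkron_apply, mul_assoc]
  have e1 : i.divNat.divNat = (Fin.cast (mul_assoc a b c) i).divNat := by
    ext; simp only [Fin.divNat, Fin.coe_cast]
    rw [Nat.div_div_eq_div_mul, Nat.mul_comm c b]
  have e2 : i.divNat.modNat = (Fin.cast (mul_assoc a b c) i).modNat.divNat := by
    ext; simp only [Fin.divNat, Fin.modNat, Fin.coe_cast]
    rw [Nat.mul_comm b c, Nat.mod_mul_right_div_self]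
  have e3 : i.modNat = (Fin.cast (mul_assoc a b c) i).modNat.modNat := by
    ext; simp only [Fin.modNat, Fin.coe_cast]
    rw [Nat.mod_mod_of_dvd _ ⟨b, Nat.mul_comm b c⟩]
  rw [e1, e2, e3]

lemma one_vkron {n b : ℕ} (x : Fin n → ℝ) (v : Fin b → ℝ) :
    vkron (vpow x 0) v = castV (by rw [pow_zero, one_mul]) v := by
  funext i
  show 1 * v i.modNat = v (Fin.cast (by rw [pow_zero, one_mul]) i)
  rw [one_mul]
  congr 1
  ext
  simp only [Fin.modNat, Fin.coe_cast]
  refine Nat.mod_eq_of_lt ?_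
  have h0 : n ^ 0 * b = b := by rw [pow_zero, one_mul]
  have := i.isLt
  omega

lemma vpow_add {n : ℕ} (x : Fin n → ℝ) (a b : ℕ) :
    vpow x (a + b) = castV (pow_add n a b).symm (vkron (vpow x a) (vpow x b)) := by
  induction a with
  | zero =>
      rw [one_vkron, castV_castV]
      exact (castV_vpow x (Nat.zero_add b).symm _).symm
  | succ a ih =>
      have ih2 : vkron (vpow x a) (vpow x b) = castV (pow_add n a b) (vpow x (a + b)) := by
        rw [ih, castV_castV, castV_self]
      have hstep : vkron x (vpow x (a + b)) = castV (pow_succ' n (a + b)) (vpow x (a + b + 1)) := by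
        rw [show vpow x (a + b + 1) = castV (pow_succ' n (a + b)).symm
            (vkron x (vpow x (a + b))) from rfl, castV_castV, castV_self]
      rw [show vpow x (a + 1) = castV (pow_succ' n a).symm (vkron x (vpow x a)) from rfl,
        vkron_castV_left, castV_castV, vkron_assoc, castV_castV, ih2, vkron_castV_right,
        castV_castV, hstep, castV_castV]
      exact (castV_vpow x (by omega) _).symm

lemma mkron_mulVec {a b c d : ℕ} (A : Matrix (Fin a) (Fin b) ℝ) (B : Matrix (Fin c) (Fin d) ℝ)
    (u : Fin b → ℝ) (v : Fin d → ℝ) :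
    (mkron A B).mulVec (vkron u v) = vkron (A.mulVec u) (B.mulVec v) := by
  funext i
  show ∑ j, mkron A B i j * vkron u v j = (A.mulVec u) i.divNat * (B.mulVec v) i.modNat
  rw [← Equiv.sum_comp finProdFinEquiv (fun j => mkron A B i j * vkron u v j)]
  rw [Fintype.sum_prod_type]
  rw [Matrix.mulVec, Matrix.mulVec, dotProduct, dotProduct, Finset.sum_mul_sum]
  refine Finset.sum_congr rfl fun j1 _ => Finset.sum_congr rfl fun j2 _ => ?_
  simp only [mkron, vkron, Equiv.symm_apply_apply, finProdFinEquiv_symm_apply]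
  ring

lemma castM_mulVec {a b a' b' : ℕ} (ha : a = a') (hb : b = b')
    (M : Matrix (Fin a) (Fin b) ℝ) (v : Fin b' → ℝ) :
    (castM ha hb M).mulVec v = castV ha (M.mulVec (castV hb.symm v)) := by
  subst ha; subst hb; rfl

lemma mul_castM_one {a b b' : ℕ} (h : b = b') (M : Matrix (Fin a) (Fin b) ℝ) :
    M * castM rfl h (1 : Matrix (Fin b) (Fin b) ℝ) = castM rfl h M := by
  subst h; exact Matrix.mul_one M

end Lemmas2
section Lemmas4

lemma castV_add {a b : ℕ} (h : a = b) (u v : Fin a → ℝ) :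
    castV h (u + v) = castV h u + castV h v := rfl

lemma castV_sum {a b : ℕ} {ι : Type*} (h : a = b) (s : Finset ι) (g : ι → Fin a → ℝ) :
    castV h (∑ i ∈ s, g i) = ∑ i ∈ s, castV h (g i) := by
  funext j; simp [castV, Finset.sum_apply]

lemma vkron_sum_right {a b : ℕ} {ι : Type*} (u : Fin a → ℝ) (s : Finset ι)
    (g : ι → Fin b → ℝ) :
    vkron u (∑ i ∈ s, g i) = ∑ i ∈ s, vkron u (g i) := by
  funext j; simp [vkron_apply, Finset.sum_apply, Finset.mul_sum]

lemma vkron_assoc' {a b c : ℕ} (u : Fin a → ℝ) (v : Fin b → ℝ) (w : Fin c → ℝ) :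
    vkron u (vkron v w) = castV (mul_assoc a b c) (vkron (vkron u v) w) := by
  rw [vkron_assoc, castV_castV, castV_self]

lemma kron_x_vpow {n : ℕ} (x : Fin n → ℝ) (m : ℕ) :
    vkron x (vpow x m) = castV (pow_succ' n m) (vpow x (m + 1)) := by
  rw [show vpow x (m + 1) = castV (pow_succ' n m).symm (vkron x (vpow x m)) from rfl,
    castV_castV, castV_self]

end Lemmas4
section Lemmas3

lemma sum_mulVec {a b : ℕ} {ι : Type*} (s : Finset ι) (M : ι → Matrix (Fin a) (Fin b) ℝ)
    (v : Fin b → ℝ) : (∑ i ∈ s, M i).mulVec v = ∑ i ∈ s, (M i).mulVec v := by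
  funext j
  simp only [Matrix.mulVec, dotProduct, Matrix.sum_apply, Finset.sum_apply, Finset.sum_mul]
  rw [Finset.sum_comm]

/-- The value of the derivative of `vpow · N` at `x` in direction `v`. -/
def dsum {n : ℕ} (N : ℕ) (x v : Fin n → ℝ) : Fin (n ^ N) → ℝ :=
  ∑ i : Fin N,
    castV (by have := i.isLt; rw [← pow_succ', ← pow_add]; congr 1; omega)
      (vkron (vpow x (i : ℕ)) (vkron v (vpow x (N - 1 - (i : ℕ)))))

lemma hasFDerivAt_vpow {n : ℕ} (N : ℕ) (x : Fin n → ℝ) :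
    ∃ L : (Fin n → ℝ) →L[ℝ] (Fin (n ^ N) → ℝ),
      HasFDerivAt (fun y => vpow y N) L x ∧ ∀ v, L v = dsum N x v := by
  induction N with
  | zero =>
      refine ⟨0, ?_, ?_⟩
      · exact hasFDerivAt_const _ x
      · intro v; show (0:(Fin n → ℝ) →L[ℝ] _) v = _; simp [dsum]; rfl
  | succ N ih =>
      obtain ⟨L, hL, hLv⟩ := ih
      set ℓ : (Fin n → ℝ) →ₗ[ℝ] (Fin (n ^ (N + 1)) → ℝ) :=
        { toFun := fun v => castV (pow_succ' n N).symm (vkron v (vpow x N) + vkron x (L v))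
          map_add' := by
            intro u v
            funext i
            simp only [castV, Pi.add_apply, vkron_apply, map_add]
            ring
          map_smul' := by
            intro c v
            funext i
            simp only [castV, Pi.smul_apply, Pi.add_apply, vkron_apply, _root_.map_smul,
              RingHom.id_apply, smul_eq_mul]
            ring } with hℓ
      refine ⟨ℓ.toContinuousLinearMap, ?_, ?_⟩
      · refine hasFDerivAt_pi'.2 fun i => ?_
        have h1 : HasFDerivAt (fun y : Fin n → ℝ => y (Fin.cast (pow_succ' n N) i).divNat)
            (ContinuousLinearMap.proj (R := ℝ) (Fin.cast (pow_succ' n N) i).divNat) x :=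
          (ContinuousLinearMap.proj (R := ℝ) (φ := fun _ : Fin n => ℝ)
            ((Fin.cast (pow_succ' n N) i).divNat)).hasFDerivAt
        have h2 := hasFDerivAt_pi'.1 hL (Fin.cast (pow_succ' n N) i).modNat
        have key := h1.mul h2
        have heq : (ContinuousLinearMap.proj (R := ℝ) i).comp
              (ℓ.toContinuousLinearMap : (Fin n → ℝ) →L[ℝ] (Fin (n ^ (N + 1)) → ℝ))
            = x (Fin.cast (pow_succ' n N) i).divNat •
                (ContinuousLinearMap.proj (Fin.cast (pow_succ' n N) i).modNat).comp L +
              vpow x N (Fin.cast (pow_succ' n N) i).modNat •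
                ContinuousLinearMap.proj (Fin.cast (pow_succ' n N) i).divNat := by
          ext v
          simp only [ContinuousLinearMap.comp_apply, ContinuousLinearMap.proj_apply,
            ContinuousLinearMap.add_apply, ContinuousLinearMap.smul_apply,
            LinearMap.coe_toContinuousLinearMap', hℓ, LinearMap.coe_mk, AddHom.coe_mk,
            castV, Pi.add_apply, vkron_apply, smul_eq_mul]
          ring
        rw [heq]
        exact key
      · intro v
        show castV (pow_succ' n N).symm (vkron v (vpow x N) + vkron x (L v)) = _
        rw [hLv]
        have head : ∀ (e e2 : ℕ), e = 0 → e2 = N →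
            ∀ (pf : n ^ e * (n * n ^ e2) = n ^ (N + 1)),
            castV pf (vkron (vpow x e) (vkron v (vpow x e2)))
              = castV (pow_succ' n N).symm (vkron v (vpow x N)) := by
          intro e e2 he he2 pf
          subst he; subst he2
          rw [one_vkron, castV_castV, castV_eq_iff]
          rfl
        have tail : ∀ (i : Fin N) (e1 e2 : ℕ), e1 = (i : ℕ) + 1 → e2 = N - 1 - (i : ℕ) →
            ∀ (pf : n ^ e1 * (n * n ^ e2) = n ^ (N + 1))
              (pf2 : n ^ (i : ℕ) * (n * n ^ (N - 1 - (i : ℕ))) = n ^ N),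
            castV pf (vkron (vpow x e1) (vkron v (vpow x e2)))
              = castV (pow_succ' n N).symm
                  (vkron x (castV pf2
                    (vkron (vpow x (i : ℕ)) (vkron v (vpow x (N - 1 - (i : ℕ))))))) := by
          intro i e1 e2 he1 he2 pf pf2
          subst he1; subst he2
          conv_rhs => rw [vkron_castV_right, castV_castV, vkron_assoc', kron_x_vpow,
            vkron_castV_left, castV_castV, castV_castV]
        simp only [dsum]
        rw [Fin.sum_univ_succ, vkron_sum_right, castV_add, castV_sum]
        congr 1
        · exact (head _ _ rfl (by simp) _).symm
        · refine Finset.sum_congr rfl fun i _ => ?_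
          exact (tail i _ _ (Fin.val_succ i) (by rw [Fin.val_succ]; omega) _ _).symm

end Lemmas3
section Lemmas5

lemma mul_castM {a b c c' : ℕ} (h : c = c') (M : Matrix (Fin a) (Fin b) ℝ)
    (X : Matrix (Fin b) (Fin c) ℝ) : M * castM rfl h X = castM rfl h (M * X) := by
  subst h; rfl

lemma dsum_eq_Bmat {n k : ℕ} (hk : 2 ≤ k) (A : Matrix (Fin n) (Fin (n ^ (k - 1))) ℝ)
    (N : ℕ) (x : Fin n → ℝ) :
    dsum N x (A.mulVec (vpow x (k - 1)))
      = (Bmat k N hk A).mulVec (vpow x (N + k - 2)) := by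
  rw [Bmat, sum_mulVec, dsum]
  refine Finset.sum_congr rfl fun i _ => ?_
  rw [castM_mulVec]
  have e : (↑i : ℕ) + ((k - 1) + (N - 1 - (i : ℕ))) = N + k - 2 := by
    have := i.isLt; omega
  conv_rhs => rw [vpow_congr x e, vpow_add, vpow_add, vkron_castV_right, castV_castV,
    castV_castV, castV_castV, castV_self, mkron_mulVec, mkron_mulVec, Matrix.one_mulVec,
    Matrix.one_mulVec]

end Lemmas5
section Main

lemma lie_inv {n k m : ℕ} (hk : 2 ≤ k) (A : Matrix (Fin n) (Fin (n ^ (k - 1))) ℝ)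
    (C : Matrix (Fin m) (Fin n) ℝ) (p : ℕ) :
    ∀ x : Fin n → ℝ,
      lieIter (fun y => A.mulVec (vpow y (k - 1))) (fun y => C.mulVec y) (p + 1) x =
        (C * A * Bchain k hk A p).mulVec (vpow x ((p + 1) * k - (2 * (p + 1) - 1))) := by
  induction p with
  | zero =>
      intro x
      have hlin : HasFDerivAt (fun y : Fin n → ℝ => C.mulVec y)
          (LinearMap.toContinuousLinearMap (Matrix.mulVecLin C)) x :=
        (LinearMap.toContinuousLinearMap (Matrix.mulVecLin C)).hasFDerivAt
      show fderiv ℝ (fun y : Fin n → ℝ => C.mulVec y) x (A.mulVec (vpow x (k - 1))) = _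
      rw [hlin.fderiv]
      show C.mulVec (A.mulVec (vpow x (k - 1))) = _
      rw [Matrix.mulVec_mulVec]
      show _ = (C * A * castM rfl _ (1 : Matrix (Fin (n ^ (k - 1))) (Fin (n ^ (k - 1))) ℝ)).mulVec _
      rw [mul_castM_one, castM_mulVec, castV_rfl,
        castV_vpow x (show (0 + 1) * k - (2 * (0 + 1) - 1) = k - 1 by omega)]
  | succ p ih =>
      intro x
      have hfun : lieIter (fun y => A.mulVec (vpow y (k - 1))) (fun y => C.mulVec y) (p + 1)
          = fun y => (C * A * Bchain k hk A p).mulVec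
              (vpow y ((p + 1) * k - (2 * (p + 1) - 1))) := funext ih
      obtain ⟨L, hL, hLv⟩ := hasFDerivAt_vpow ((p + 1) * k - (2 * (p + 1) - 1)) x
      have hD := ((LinearMap.toContinuousLinearMap
          (Matrix.mulVecLin (C * A * Bchain k hk A p))).hasFDerivAt).comp x hL
      have hfe : (⇑(LinearMap.toContinuousLinearMap
              (Matrix.mulVecLin (C * A * Bchain k hk A p))) ∘ fun y =>
            vpow y ((p + 1) * k - (2 * (p + 1) - 1)))
          = fun y => (C * A * Bchain k hk A p).mulVec
              (vpow y ((p + 1) * k - (2 * (p + 1) - 1))) := by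
        funext y
        simp [Function.comp, LinearMap.coe_toContinuousLinearMap', Matrix.mulVecLin_apply,
          Matrix.mul_assoc]
      rw [hfe] at hD
      have hD' := hD
      show fderiv ℝ (lieIter (fun y => A.mulVec (vpow y (k - 1))) (fun y => C.mulVec y) (p + 1))
          x (A.mulVec (vpow x (k - 1))) = _
      rw [hfun, hD'.fderiv]
      simp only [ContinuousLinearMap.comp_apply, LinearMap.coe_toContinuousLinearMap',
        Matrix.mulVecLin_apply]
      rw [hLv, dsum_eq_Bmat hk A, Matrix.mulVec_mulVec]
      show _ = (C * A * castM rfl _ (Bchain k hk A p *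
          Bmat k ((p + 1) * k - (2 * (p + 1) - 1)) hk A)).mulVec _
      rw [mul_castM, castM_mulVec, castV_rfl,
        castV_vpow x (show (p + 1 + 1) * k - (2 * (p + 1 + 1) - 1)
          = (p + 1) * k - (2 * (p + 1) - 1) + k - 2 by
            have h3 : (p + 1) * 2 ≤ (p + 1) * k := Nat.mul_le_mul_left (p + 1) hk
            have h2 : (p + 1 + 1) * k = (p + 1) * k + k := by ring
            omega),
        ← Matrix.mul_assoc]

end Main

/-- For `f_k(x) = A_k x^{[k-1]}` (`A_k` an `n × n^(k-1)` matrix, `k ≥ 2`)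
and `g(x) = C x`, for every `j ≥ 2`,
`L_{f_k}^j g(x) = C A_k B̄_{k2} B̄_{k3} ⋯ B̄_{kj} x^{[jk-(2j-1)]}`, where
`B̄_{kp} = Σ_{i=1}^{(p-1)k-(2p-3)} I ⊗ ⋯ ⊗ A_k ⊗ ⋯ ⊗ I`
(`(p-1)k-(2p-3)` Kronecker factors, `A_k` in the `i`-th factor). -/
theorem jth_lie_derivative_eq (n k m : ℕ) (hk : 2 ≤ k)
    (A : Matrix (Fin n) (Fin (n ^ (k - 1))) ℝ) (C : Matrix (Fin m) (Fin n) ℝ)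
    (j : ℕ) (hj : 2 ≤ j) (x : Fin n → ℝ) :
    lieIter (fun y => A.mulVec (vpow y (k - 1))) (fun y => C.mulVec y) j x =
      (C * A *
          castM rfl (by have hjj : j - 1 + 1 = j := Nat.sub_add_cancel (by omega); rw [hjj])
            (Bchain k hk A (j - 1))).mulVec
        (vpow x (j * k - (2 * j - 1))) := by
  obtain ⟨p, rfl⟩ : ∃ p, j = p + 1 := ⟨j - 1, by omega⟩
  rw [lie_inv hk A C p x, mul_castM, castM_mulVec, castV_rfl,
    castV_vpow x (show (p + 1) * k - (2 * (p + 1) - 1)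
      = (p + 1 - 1 + 1) * k - (2 * (p + 1 - 1 + 1) - 1) from rfl)]
  rfl

end
end

section
/- Let K ≥ 3, and for each k = 2, …, K let A_k be a real n × n^{k−1} matrix with associated vector field f_k(x) = A_k x^{[k−1]}; set f = Σ_{k=2}^{K} f_k and g(x) = C x for a real m × n matrix C. Then for every j ≥ 0, every component of L_f^j g is a polynomial in x of total degree at most j(K−2)+1, and its homogeneous component of degree exactly j(K−2)+1 equals the corresponding component of L_{f_K}^j g; that is, the top-degree homogeneous part of the j-th Lie derivative of the output along f is generated exclusively by the vector field of maximum cardinality K. -/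
open Matrix BigOperators

noncomputable section

/-!
Lie differentiation along a polynomial vector field `F` acts on polynomials as the derivation
`∑ᵢ Fᵢ ∂ᵢ` (`MvPolynomial.mkDerivation`), so `L_f^j g` is the polynomial obtained by iterating
it on the linear output. A derivation along a field of degree `≤ d + 2` raises the total degree
by at most `d + 1`. Write `F = G + (F - G)`, where `G = f_K` is homogeneous of degree
`K - 1 = d + 2` and `F - G` has degree `≤ d + 1`: the `j`-th iterate along `G` of a linear form is
homogeneous of degree `j (d + 1) + 1`, and it differs from the `j`-th iterate along `F` by a
polynomial of degree `≤ j (d + 1)`, since each step either uses `F - G` or acts on that difference.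
-/

namespace MvPolynomial

section Matrix

variable {R σ ι κ : Type*} [CommSemiring R] [Fintype κ]

lemma isHomogeneous_mulVec_map_C (A : Matrix ι κ R) {v : κ → MvPolynomial σ R} {d : ℕ}
    (hv : ∀ l, (v l).IsHomogeneous d) (i : ι) : ((A.map C *ᵥ v) i).IsHomogeneous d :=
  IsHomogeneous.sum _ _ _ fun l _ => (hv l).C_mul _

lemma eval_mulVec_map_C (A : Matrix ι κ R) (v : κ → MvPolynomial σ R) (x : σ → R) (i : ι) :
    eval x ((A.map C *ᵥ v) i) = (A *ᵥ fun l => eval x (v l)) i := by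
  rw [RingHom.map_mulVec, Matrix.map_map]
  congr
  ext
  simp

end Matrix

section Derivation

variable {R σ : Type*} [CommSemiring R]

lemma pderiv_eq_zero_of_totalDegree_eq_zero {p : MvPolynomial σ R} (h : p.totalDegree = 0)
    (i : σ) : pderiv i p = 0 := by
  rw [totalDegree_eq_zero_iff_eq_C] at h
  rw [h, pderiv_C]

lemma totalDegree_pderiv_le (i : σ) (p : MvPolynomial σ R) :
    (pderiv i p).totalDegree ≤ p.totalDegree - 1 := by
  rw [← sum_homogeneousComponent p, map_sum]
  refine totalDegree_finsetSum_le fun k hk => ?_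
  rw [sum_homogeneousComponent]
  have hk : k < p.totalDegree + 1 := Finset.mem_range.mp hk
  exact (homogeneousComponent_isHomogeneous k p).pderiv.totalDegree_le.trans (by omega)

variable [Fintype σ]

lemma mkDerivation_eq_sum_pderiv (F : σ → MvPolynomial σ R) (p : MvPolynomial σ R) :
    mkDerivation R F p = ∑ i, F i * pderiv i p := by
  classical
  induction p using MvPolynomial.induction_on with
  | C a => simp
  | add p q hp hq => simp [hp, hq, mul_add, Finset.sum_add_distrib]
  | mul_X p i hp =>
    simp only [Derivation.leibniz, hp, mkDerivation_X, smul_eq_mul, mul_add, Finset.sum_add_distrib,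
      pderiv_X, Pi.single_apply, mul_ite, mul_one, mul_zero, Finset.sum_ite_eq, Finset.mem_univ,
      if_true, Finset.mul_sum]
    rw [mul_comm p]
    simp only [mul_left_comm]

lemma totalDegree_mkDerivation_le {F : σ → MvPolynomial σ R} {a : ℕ}
    (hF : ∀ i, (F i).totalDegree ≤ a + 1) (p : MvPolynomial σ R) :
    (mkDerivation R F p).totalDegree ≤ a + p.totalDegree := by
  rw [mkDerivation_eq_sum_pderiv]
  refine totalDegree_finsetSum_le fun i _ => ?_
  rcases Nat.eq_zero_or_pos p.totalDegree with h0 | hpos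
  · simp [pderiv_eq_zero_of_totalDegree_eq_zero h0]
  · exact (totalDegree_mul _ _).trans (by have := hF i; have := totalDegree_pderiv_le i p; omega)

lemma isHomogeneous_mkDerivation {F : σ → MvPolynomial σ R} {a b : ℕ}
    (hF : ∀ i, (F i).IsHomogeneous (a + 1)) {p : MvPolynomial σ R} (hp : p.IsHomogeneous b) :
    (mkDerivation R F p).IsHomogeneous (a + b) := by
  rw [mkDerivation_eq_sum_pderiv]
  refine IsHomogeneous.sum _ _ _ fun i _ => ?_
  rcases Nat.eq_zero_or_pos b with rfl | hb
  · rw [pderiv_eq_zero_of_totalDegree_eq_zero ((totalDegree_zero_iff_isHomogeneous _).mpr hp),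
      mul_zero]
    exact isHomogeneous_zero _ _ _
  · convert (hF i).mul hp.pderiv using 1
    omega

lemma isHomogeneous_iterate_mkDerivation {F : σ → MvPolynomial σ R} {a b : ℕ}
    (hF : ∀ i, (F i).IsHomogeneous (a + 1)) {p : MvPolynomial σ R} (hp : p.IsHomogeneous b)
    (j : ℕ) : ((mkDerivation R F)^[j] p).IsHomogeneous (j * a + b) := by
  induction j with
  | zero => simpa using hp
  | succ j ih =>
    rw [Function.iterate_succ_apply', show (j + 1) * a + b = a + (j * a + b) by ring]
    exact isHomogeneous_mkDerivation hF ih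

end Derivation

section TopDegree

variable {R σ : Type*} [CommRing R] [Fintype σ]

lemma mkDerivation_sub_mkDerivation (F G : σ → MvPolynomial σ R) (p : MvPolynomial σ R) :
    mkDerivation R F p - mkDerivation R G p = mkDerivation R (F - G) p := by
  simp [mkDerivation_eq_sum_pderiv, sub_mul]

variable {F G : σ → MvPolynomial σ R} {d : ℕ} (hG : ∀ i, (G i).IsHomogeneous (d + 2))
  (hFG : ∀ i, (F i - G i).totalDegree ≤ d + 1) {p : MvPolynomial σ R} (hp : p.IsHomogeneous 1)
include hG hFG hp

lemma totalDegree_iterate_mkDerivation_sub_le (j : ℕ) :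
    ((mkDerivation R F)^[j] p - (mkDerivation R G)^[j] p).totalDegree ≤ j * (d + 1) := by
  have hF (i : σ) : (F i).totalDegree ≤ d + 1 + 1 := by
    rw [← add_sub_cancel (G i) (F i)]
    exact (totalDegree_add _ _).trans (max_le (hG i).totalDegree_le ((hFG i).trans (by omega)))
  induction j with
  | zero => simp
  | succ j ih =>
    set P := (mkDerivation R F)^[j] p
    set Q := (mkDerivation R G)^[j] p
    have hQ : Q.totalDegree ≤ j * (d + 1) + 1 :=
      (isHomogeneous_iterate_mkDerivation hG hp j).totalDegree_le
    have hsplit : mkDerivation R F P - mkDerivation R G Q =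
        mkDerivation R F (P - Q) + mkDerivation R (F - G) Q := by
      rw [← mkDerivation_sub_mkDerivation, map_sub]
      ring
    rw [Function.iterate_succ_apply', Function.iterate_succ_apply', hsplit]
    refine (totalDegree_add _ _).trans (max_le ?_ ?_)
    · exact (totalDegree_mkDerivation_le hF _).trans (by nlinarith)
    · exact (totalDegree_mkDerivation_le hFG Q).trans (by nlinarith)

lemma totalDegree_iterate_mkDerivation_le (j : ℕ) :
    ((mkDerivation R F)^[j] p).totalDegree ≤ j * (d + 1) + 1 := by
  rw [← sub_add_cancel ((mkDerivation R F)^[j] p) ((mkDerivation R G)^[j] p)]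
  exact (totalDegree_add _ _).trans (max_le
    ((totalDegree_iterate_mkDerivation_sub_le hG hFG hp j).trans (Nat.le_succ _))
    (isHomogeneous_iterate_mkDerivation hG hp j).totalDegree_le)

lemma homogeneousComponent_iterate_mkDerivation (j : ℕ) :
    homogeneousComponent (j * (d + 1) + 1) ((mkDerivation R F)^[j] p) =
      (mkDerivation R G)^[j] p := by
  rw [← sub_add_cancel ((mkDerivation R F)^[j] p) ((mkDerivation R G)^[j] p), map_add,
    homogeneousComponent_eq_zero _ _
      ((totalDegree_iterate_mkDerivation_sub_le hG hFG hp j).trans_lt (Nat.lt_succ_self _)),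
    homogeneousComponent_eq_self (isHomogeneous_iterate_mkDerivation hG hp j), zero_add]

end TopDegree

theorem hasFDerivAt_eval {𝕜 σ : Type*} [NontriviallyNormedField 𝕜] [Fintype σ]
    (p : MvPolynomial σ 𝕜) (x : σ → 𝕜) :
    HasFDerivAt (fun y => eval y p)
      (∑ i, eval x (pderiv i p) • ContinuousLinearMap.proj i : (σ → 𝕜) →L[𝕜] 𝕜) x := by
  classical
  induction p using MvPolynomial.induction_on with
  | C a =>
    simp only [eval_C]
    exact (hasFDerivAt_const a x).congr_fderiv (by ext; simp)
  | add p q hp hq =>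
    simp only [map_add]
    exact (hp.add hq).congr_fderiv (by ext; simp [add_mul, Finset.sum_add_distrib])
  | mul_X p i hp =>
    simp only [map_mul, eval_X]
    refine (hp.mul (hasFDerivAt_apply i x)).congr_fderiv ?_
    ext v
    simp [pderiv_X, Pi.single_apply, add_mul, Finset.sum_add_distrib, Finset.mul_sum, apply_ite,
      ite_mul, mul_assoc]

end MvPolynomial

open MvPolynomial

lemma lieD_eval {n m : ℕ} (F : Fin n → MvPolynomial (Fin n) ℝ)
    (p : Fin m → MvPolynomial (Fin n) ℝ) :
    lieD (fun y i => eval y (F i)) (fun y b => eval y (p b)) =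
      fun x b => eval x (mkDerivation ℝ F (p b)) := by
  funext x b
  have hp : HasFDerivAt (fun y b => eval y (p b))
      (ContinuousLinearMap.pi fun b =>
        (∑ i, eval x (pderiv i (p b)) • ContinuousLinearMap.proj i : (Fin n → ℝ) →L[ℝ] ℝ)) x :=
    hasFDerivAt_pi.2 fun b => hasFDerivAt_eval (p b) x
  simp [lieD, hp.fderiv, mkDerivation_eq_sum_pderiv, mul_comm]

lemma lieIter_eval {n m : ℕ} (F : Fin n → MvPolynomial (Fin n) ℝ)
    (p : Fin m → MvPolynomial (Fin n) ℝ) (j : ℕ) :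
    lieIter (fun y i => eval y (F i)) (fun y b => eval y (p b)) j =
      fun x b => eval x ((mkDerivation ℝ F)^[j] (p b)) := by
  induction j with
  | zero => rfl
  | succ j ih => simp only [lieIter, ih, lieD_eval, Function.iterate_succ_apply']

def vpowPoly (R : Type*) [CommSemiring R] (n : ℕ) :
    (m : ℕ) → Fin (n ^ m) → MvPolynomial (Fin n) R
  | 0 => fun _ => 1
  | m + 1 => fun i =>
      vpowPoly R n m (finProdFinEquiv.symm (Fin.cast (pow_succ' n m) i)).2 *
        X (finProdFinEquiv.symm (Fin.cast (pow_succ' n m) i)).1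

lemma eval_vpowPoly {n : ℕ} (x : Fin n → ℝ) :
    ∀ (m : ℕ) (i : Fin (n ^ m)), eval x (vpowPoly ℝ n m i) = vpow x m i
  | 0, _ => by simp [vpowPoly, vpow]
  | m + 1, _ => by simp [vpowPoly, vpow, castV, vkron, eval_vpowPoly x m, mul_comm]

lemma isHomogeneous_vpowPoly (R : Type*) [CommSemiring R] (n : ℕ) :
    ∀ (m : ℕ) (i : Fin (n ^ m)), (vpowPoly R n m i).IsHomogeneous m
  | 0, _ => isHomogeneous_one _ _
  | m + 1, _ => (isHomogeneous_vpowPoly R n m _).mul (isHomogeneous_X R _)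

lemma mulVec_vpow_eq_eval {n d : ℕ} (A : Matrix (Fin n) (Fin (n ^ d)) ℝ) (y : Fin n → ℝ) :
    A *ᵥ vpow y d = fun i => eval y ((A.map C *ᵥ vpowPoly ℝ n d) i) := by
  funext i
  simp [eval_mulVec_map_C, eval_vpowPoly]

/-- For `K ≥ 3`, `f_k(x) = A_k x^{[k-1]}` (`k = 2, …, K`),
`f = Σ_{k=2}^K f_k` and `g(x) = C x`: for every `j ≥ 0`, every component of `L_f^j g` is a
polynomial of total degree at most `j(K-2)+1`, and its homogeneous component of degree
exactly `j(K-2)+1` equals the corresponding component of `L_{f_K}^j g`. -/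
theorem top_degree_part_from_max_cardinality (n m K : ℕ) (hK : 3 ≤ K)
    (A : (k : ℕ) → Matrix (Fin n) (Fin (n ^ (k - 1))) ℝ)
    (C : Matrix (Fin m) (Fin n) ℝ) (j : ℕ) (b : Fin m) :
    ∃ ψ : MvPolynomial (Fin n) ℝ,
      (∀ x : Fin n → ℝ,
        lieIter (fun y => ∑ k ∈ Finset.Icc 2 K, (A k).mulVec (vpow y (k - 1)))
            (fun y => C.mulVec y) j x b = MvPolynomial.eval x ψ) ∧
      ψ.totalDegree ≤ j * (K - 2) + 1 ∧
      (∀ x : Fin n → ℝ,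
        MvPolynomial.eval x (MvPolynomial.homogeneousComponent (j * (K - 2) + 1) ψ) =
          lieIter (fun y => (A K).mulVec (vpow y (K - 1))) (fun y => C.mulVec y) j x b) := by
  let f (k : ℕ) : Fin n → MvPolynomial (Fin n) ℝ := (A k).map MvPolynomial.C *ᵥ vpowPoly ℝ n (k - 1)
  let F : Fin n → MvPolynomial (Fin n) ℝ := fun i => ∑ k ∈ Finset.Icc 2 K, f k i
  let g : Fin m → MvPolynomial (Fin n) ℝ := C.map MvPolynomial.C *ᵥ X
  have hF : (fun y => ∑ k ∈ Finset.Icc 2 K, A k *ᵥ vpow y (k - 1)) = fun y i => eval y (F i) := by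
    funext y i
    simp [F, f, mulVec_vpow_eq_eval, Finset.sum_apply]
  have hg : (fun y => C *ᵥ y) = fun y b => eval y (g b) := by
    funext y b
    simp [g, eval_mulVec_map_C]
  have hTop (i : Fin n) : (f K i).IsHomogeneous (K - 3 + 2) := by
    convert isHomogeneous_mulVec_map_C _ (isHomogeneous_vpowPoly ℝ n (K - 1)) i using 2
    omega
  have hLow (i : Fin n) : (F i - f K i).totalDegree ≤ K - 3 + 1 := by
    rw [← Finset.sum_erase_eq_sub (Finset.mem_Icc.2 ⟨by omega, le_rfl⟩)]
    refine totalDegree_finsetSum_le fun k hk => ?_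
    obtain ⟨hkK, hk⟩ := Finset.mem_erase.1 hk
    have := (Finset.mem_Icc.1 hk).2
    exact (isHomogeneous_mulVec_map_C _ (isHomogeneous_vpowPoly ℝ n (k - 1)) i).totalDegree_le.trans
      (by omega)
  have hLin (b : Fin m) : (g b).IsHomogeneous 1 :=
    isHomogeneous_mulVec_map_C _ (fun i => isHomogeneous_X ℝ i) b
  rw [hF, funext (mulVec_vpow_eq_eval (A K)), hg, lieIter_eval, lieIter_eval,
    show K - 2 = K - 3 + 1 by omega]
  exact ⟨_, fun x => rfl, totalDegree_iterate_mkDerivation_le hTop hLow (hLin b) j,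
    fun x => by rw [homogeneousComponent_iterate_mkDerivation hTop hLow (hLin b) j]⟩

end
end

section
/- Let M and N be matrices of the same shape, with rows indexed by a finite set R and n columns, whose entries are real polynomials in n variables. Suppose there is a function d : R → ℕ such that for each row r ∈ R, every entry of M in row r is homogeneous of degree d(r), and every entry of N in row r is a polynomial of total degree strictly less than d(r). If M, viewed as a matrix over the field of real rational functions in n variables, has rank n, then M + N also has rank n over the field of real rational functions in n variables. -/
/-!
Rank `n` over the fraction field means that `mulVec` has trivial kernel, and clearing
denominators reduces this to the kernel over the polynomial ring. If `(M + N) w = 0` with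
`w ≠ 0` and `D` is the largest total degree of an entry of `w`, then the degree `d r + D`
component of row `r` of this equation reads `M w_D = 0`, where the top part `w_D` of `w` is
nonzero.
-/

namespace MvPolynomial

variable {σ R : Type*} [CommSemiring R]

attribute [local instance] MvPolynomial.gradedAlgebra in
theorem IsHomogeneous.homogeneousComponent_add_mul {p : MvPolynomial σ R} {a : ℕ}
    (hp : p.IsHomogeneous a) (b : ℕ) (q : MvPolynomial σ R) :
    homogeneousComponent (a + b) (p * q) = p * homogeneousComponent b q := by
  have := DirectSum.coe_decompose_mul_add_of_left_mem (homogeneousSubmodule σ R) (j := b)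
    (b := q) (show p ∈ homogeneousSubmodule σ R a from hp)
  rwa [DirectSum.decompose, Equiv.coe_fn_mk, decomposition.decompose'_apply,
    decomposition.decompose'_apply] at this

theorem homogeneousComponent_totalDegree_ne_zero {p : MvPolynomial σ R} (hp : p ≠ 0) :
    homogeneousComponent p.totalDegree p ≠ 0 := by
  obtain ⟨e, he, hdeg⟩ := Finset.exists_mem_eq_sup p.support (support_nonempty.mpr hp)
    fun e => e.degree
  refine ne_of_apply_ne (coeff e) ?_
  rw [coeff_homogeneousComponent, if_pos, coeff_zero]
  · exact mem_support_iff.mp he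
  · rw [← hdeg, totalDegree]
    rfl

theorem exists_totalDegree_le_and_homogeneousComponent_ne_zero {ι : Type*} [Fintype ι]
    {w : ι → MvPolynomial σ R} (hw : w ≠ 0) :
    ∃ D, (∀ i, (w i).totalDegree ≤ D) ∧ (fun i => homogeneousComponent D (w i)) ≠ 0 := by
  classical
  obtain ⟨i₀, hi₀⟩ := Function.ne_iff.mp hw
  obtain ⟨i, hi, hmax⟩ := Finset.exists_max_image {i | w i ≠ 0} (fun i => (w i).totalDegree)
    ⟨i₀, by simpa using hi₀⟩
  refine ⟨(w i).totalDegree, fun j => ?_, Function.ne_iff.mpr ⟨i, ?_⟩⟩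
  · by_cases hj : w j = 0
    · simp [hj]
    · exact hmax j (by simpa using hj)
  · exact homogeneousComponent_totalDegree_ne_zero (by simpa using hi)

end MvPolynomial

namespace Matrix

open MvPolynomial

variable {m n σ R : Type*} [Fintype n] [CommSemiring R]

theorem homogeneousComponent_add_mulVec {M N : Matrix m n (MvPolynomial σ R)} {d : m → ℕ}
    (hM : ∀ r c, (M r c).IsHomogeneous (d r))
    (hN : ∀ r c, N r c = 0 ∨ (N r c).totalDegree < d r)
    {w : n → MvPolynomial σ R} {D : ℕ} (hw : ∀ c, (w c).totalDegree ≤ D) (r : m) :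
    homogeneousComponent (d r + D) (((M + N) *ᵥ w) r) =
      (M *ᵥ fun c => homogeneousComponent D (w c)) r := by
  have hNw : ∀ c, homogeneousComponent (d r + D) (N r c * w c) = 0 := fun c => by
    rcases hN r c with h | h
    · rw [h, zero_mul, map_zero]
    · exact homogeneousComponent_eq_zero _ _
        ((totalDegree_mul _ _).trans_lt (Nat.add_lt_add_of_lt_of_le h (hw c)))
  simp only [mulVec, dotProduct, map_sum, add_apply, add_mul, map_add,
    (hM r _).homogeneousComponent_add_mul, hNw, add_zero]

theorem ker_mulVecLin_add_eq_bot {M N : Matrix m n (MvPolynomial σ R)} {d : m → ℕ}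
    (hM : ∀ r c, (M r c).IsHomogeneous (d r))
    (hN : ∀ r c, N r c = 0 ∨ (N r c).totalDegree < d r)
    (hker : LinearMap.ker M.mulVecLin = ⊥) : LinearMap.ker (M + N).mulVecLin = ⊥ := by
  rw [ker_mulVecLin_eq_bot_iff] at hker ⊢
  intro w hw
  by_contra hw0
  obtain ⟨D, hD, htop⟩ := exists_totalDegree_le_and_homogeneousComponent_ne_zero hw0
  refine htop (hker _ (funext fun r => ?_))
  rw [← homogeneousComponent_add_mulVec hM hN hD, hw, Pi.zero_apply, map_zero]

end Matrix

namespace Matrix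

variable {m n A K : Type*} [Fintype n]

theorem ker_mulVecLin_map_algebraMap_eq_bot_iff [CommRing A] [CommRing K] [Algebra A K]
    [IsFractionRing A K] (M : Matrix m n A) :
    LinearMap.ker (M.map (algebraMap A K)).mulVecLin = ⊥ ↔ LinearMap.ker M.mulVecLin = ⊥ := by
  simp only [ker_mulVecLin_eq_bot_iff]
  constructor
  · intro h w hw
    have : (algebraMap A K) ∘ w = 0 := h _ (funext fun r => by
      rw [← RingHom.map_mulVec, hw, Pi.zero_apply, map_zero, Pi.zero_apply])
    exact funext fun c => IsFractionRing.injective A K (by simpa using congrFun this c)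
  · intro h v hv
    obtain ⟨b, hb⟩ := IsLocalization.exist_integer_multiples_of_finite (nonZeroDivisors A) v
    choose w hw using hb
    have hwv : algebraMap A K ∘ w = (b : A) • v := funext hw
    have hw0 : w = 0 := h w (funext fun r => IsFractionRing.injective A K (by
      rw [RingHom.map_mulVec, hwv, mulVec_smul, hv, smul_zero, Pi.zero_apply, Pi.zero_apply,
        map_zero]))
    funext c
    have := hw c
    rw [hw0, Pi.zero_apply, map_zero, Algebra.smul_def] at this
    exact (IsLocalization.map_units K b).mul_right_eq_zero.mp this.symm

theorem rank_eq_card_width_iff_ker_eq_bot [Field K] (M : Matrix m n K) :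
    M.rank = Fintype.card n ↔ LinearMap.ker M.mulVecLin = ⊥ := by
  have := LinearMap.finrank_range_add_finrank_ker M.mulVecLin
  rw [Module.finrank_fintype_fun_eq_card] at this
  rw [rank, ← Submodule.finrank_eq_zero (R := K)]
  omega

end Matrix

theorem rank_add_lower_degree_perturbation_general (n : ℕ) (R : Type)
    (M N : Matrix R (Fin n) (MvPolynomial (Fin n) ℝ)) (d : R → ℕ)
    (hM : ∀ r c, (M r c).IsHomogeneous (d r))
    (hN : ∀ r c, N r c = 0 ∨ (N r c).totalDegree < d r)
    (hrank : (M.map (algebraMap (MvPolynomial (Fin n) ℝ)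
        (FractionRing (MvPolynomial (Fin n) ℝ)))).rank = n) :
    ((M + N).map (algebraMap (MvPolynomial (Fin n) ℝ)
        (FractionRing (MvPolynomial (Fin n) ℝ)))).rank = n := by
  have rank_eq_iff (A : Matrix R (Fin n) (FractionRing (MvPolynomial (Fin n) ℝ))) :
      A.rank = n ↔ LinearMap.ker A.mulVecLin = ⊥ := by
    rw [← A.rank_eq_card_width_iff_ker_eq_bot, Fintype.card_fin]
  rw [rank_eq_iff, Matrix.ker_mulVecLin_map_algebraMap_eq_bot_iff] at hrank ⊢
  exact Matrix.ker_mulVecLin_add_eq_bot hM hN hrank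

/-- Let `M` and `N` be matrices over `ℝ[x₁,…,xₙ]` with rows indexed by a
finite set `R` and `n` columns. Suppose for some `d : R → ℕ` every entry of `M` in row `r`
is homogeneous of degree `d r` and every entry of `N` in row `r` is zero or of total degree
strictly less than `d r`. If `M` has rank `n` over the field of rational functions
`ℝ(x₁,…,xₙ)`, then so does `M + N`. -/
theorem rank_add_lower_degree_perturbation (n : ℕ) (R : Type) [Fintype R]
    (M N : Matrix R (Fin n) (MvPolynomial (Fin n) ℝ)) (d : R → ℕ)
    (hM : ∀ r c, (M r c).IsHomogeneous (d r))
    (hN : ∀ r c, N r c = 0 ∨ (N r c).totalDegree < d r)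
    (hrank : (M.map (algebraMap (MvPolynomial (Fin n) ℝ)
        (FractionRing (MvPolynomial (Fin n) ℝ)))).rank = n) :
    ((M + N).map (algebraMap (MvPolynomial (Fin n) ℝ)
        (FractionRing (MvPolynomial (Fin n) ℝ)))).rank = n :=
  rank_add_lower_degree_perturbation_general n R M N d hM hN hrank
end

section
/- Let K ≥ 2, and for each k = 2, …, K let A_k be a real n × n^{k−1} matrix with associated vector field f_k(x) = A_k x^{[k−1]}; set f = Σ_{k=2}^{K} f_k and g(x) = C x for a real m × n matrix C. Define the nonlinear observability matrix O_f(x) as the (n+1)m × n real matrix whose rows are the gradients ∇_x of the components of L_f^j g(x) for j = 0, 1, …, n, and define O_{f_K}(x) analogously using only the maximum-cardinality vector field f_K. If there exists a point x ∈ ℝⁿ at which O_{f_K}(x) has rank n, then there exists a point x ∈ ℝⁿ at which O_f(x) has rank n. (This is the rank-condition form of the proposition: if a nonuniform hypergraph is locally weakly observable when all hyperedges of cardinality less than the maximum cardinality K are removed, then the full nonuniform hypergraph is locally weakly observable.) -/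
open Matrix BigOperators

noncomputable section

/-- The nonlinear observability matrix: the `(n+1)m × n` matrix whose rows are the gradients
of the components of `L_f^j (C x)` for `j = 0, 1, …, n`, evaluated at `x`. -/
def NOM {n m : ℕ} (f : (Fin n → ℝ) → Fin n → ℝ) (C : Matrix (Fin m) (Fin n) ℝ)
    (x : Fin n → ℝ) : Matrix (Fin (n + 1) × Fin m) (Fin n) ℝ :=
  fun p c =>
    fderiv ℝ (fun y => lieIter f (fun z => C.mulVec z) p.1 y p.2) x (Pi.single c 1)

/-!
Each `f_k` is homogeneous of degree `k - 1`, so conjugating `f` by the dilation `x ↦ s⁻¹ • x` and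
multiplying by `s ^ (K - 1)` yields `f_s = ∑ₖ s ^ (K - k) • f_k`, a polynomial deformation of
`f_0 = f_K`. Lie derivatives are natural under dilations, so for `s ≠ 0` the observability matrix
of `f_s` at `x` is `diag (s ^ (j (K - 2)))` times that of `f` at `s⁻¹ • x`. The observability matrix
of `f_s` at `x` depends continuously on `s` and has full column rank at `s = 0`, hence also at some
small `s ≠ 0`, and then so does that of `f` at `s⁻¹ • x`.
-/

open Filter Topology Function
open scoped ContDiff

section KroneckerPower

variable {n : ℕ}

lemma vpow_succ_apply (x : Fin n → ℝ) (M : ℕ) (i : Fin (n ^ (M + 1))) :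
    vpow x (M + 1) i = x (finProdFinEquiv.symm (Fin.cast (pow_succ' n M) i)).1 *
      vpow x M (finProdFinEquiv.symm (Fin.cast (pow_succ' n M) i)).2 :=
  rfl

lemma vpow_smul (t : ℝ) (x : Fin n → ℝ) (M : ℕ) : vpow (t • x) M = t ^ M • vpow x M := by
  induction M with
  | zero => exact (one_smul ℝ _).symm
  | succ M ih =>
    funext i
    simp only [vpow_succ_apply, ih, Pi.smul_apply, smul_eq_mul]
    ring

lemma contDiff_vpow (M : ℕ) : ContDiff ℝ ∞ (fun x : Fin n → ℝ => vpow x M) := by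
  induction M with
  | zero => exact contDiff_const
  | succ M ih =>
    refine contDiff_pi.mpr fun i => ?_
    simp only [vpow_succ_apply]
    exact (contDiff_apply ℝ ℝ _).mul (contDiff_pi.mp ih _)

end KroneckerPower

section LieDerivative

variable {n m : ℕ}

lemma lieD_const_smul (f : (Fin n → ℝ) → Fin n → ℝ) (φ : (Fin n → ℝ) → Fin m → ℝ) (c : ℝ) :
    lieD f (c • φ) = c • lieD f φ := by
  funext x
  simp only [lieD, fderiv_const_smul_field, Pi.smul_apply, _root_.smul_apply]

lemma lieIter_const_smul (f : (Fin n → ℝ) → Fin n → ℝ) (φ : (Fin n → ℝ) → Fin m → ℝ)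
    (c : ℝ) (j : ℕ) : lieIter f (c • φ) j = c • lieIter f φ j := by
  induction j with
  | zero => rfl
  | succ j ih => simp only [lieIter, ih, lieD_const_smul]

lemma lieIter_comp_smul {f g : (Fin n → ℝ) → Fin n → ℝ} {a t : ℝ}
    (hg : ∀ x, g x = a • f (t • x)) (φ : (Fin n → ℝ) → Fin m → ℝ) (j : ℕ) :
    lieIter g (fun x => φ (t • x)) j = fun x => (t * a) ^ j • lieIter f φ j (t • x) := by
  induction j with
  | zero => simp [lieIter]
  | succ j ih =>
    funext x
    rw [lieIter, ih, show (fun x => (t * a) ^ j • lieIter f φ j (t • x)) =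
      (t * a) ^ j • fun x => lieIter f φ j (t • x) from rfl, lieD_const_smul]
    simp only [lieD, lieIter, fderiv_comp_smul, hg, Pi.smul_apply, _root_.smul_apply, map_smul,
      smul_smul, pow_succ]
    ring_nf

lemma NOM_eq_diagonal_mul {f g : (Fin n → ℝ) → Fin n → ℝ} {a t : ℝ} (ht : t ≠ 0)
    (hg : ∀ x, g x = a • f (t • x)) (C : Matrix (Fin m) (Fin n) ℝ) (x : Fin n → ℝ) :
    NOM g C x = diagonal (fun p : Fin (n + 1) × Fin m => (t * a) ^ (p.1 : ℕ)) *
      NOM f C (t • x) := by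
  ext p c
  have hC : (fun y => lieIter g (fun z => C.mulVec z) p.1 y p.2) =
      (t⁻¹ * (t * a) ^ (p.1 : ℕ)) • fun y => lieIter f (fun z => C.mulVec z) p.1 (t • y) p.2 := by
    have h := lieIter_comp_smul hg (fun z => C.mulVec z) p.1
    simp only [Matrix.mulVec_smul] at h
    rw [show (fun y => t • C.mulVec y) = t • fun y => C.mulVec y from rfl,
      lieIter_const_smul] at h
    funext y
    have hy := congrFun (congrFun h y) p.2
    simp only [Pi.smul_apply, smul_eq_mul] at hy ⊢
    rw [mul_assoc, ← hy, inv_mul_cancel_left₀ ht]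
  simp only [NOM, diagonal_mul, hC, fderiv_const_smul_field, fderiv_comp_smul
    (f := fun y => lieIter f (fun z => C.mulVec z) p.1 y p.2), Pi.smul_apply, _root_.smul_apply,
    smul_eq_mul]
  field_simp

end LieDerivative

section Parametric

variable {n m : ℕ} {P : Type*} [NormedAddCommGroup P] [NormedSpace ℝ P]
  {F : P → (Fin n → ℝ) → Fin n → ℝ}

lemma contDiff_lieD_uncurry (hF : ContDiff ℝ ∞ (uncurry F))
    {Φ : P → (Fin n → ℝ) → Fin m → ℝ} (hΦ : ContDiff ℝ ∞ (uncurry Φ)) :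
    ContDiff ℝ ∞ (uncurry fun s => lieD (F s) (Φ s)) :=
  ((hΦ.comp (contDiff_fst.fst.prodMk contDiff_snd)).fderiv contDiff_snd (by simp)).clm_apply hF

lemma contDiff_lieIter_uncurry (hF : ContDiff ℝ ∞ (uncurry F))
    {φ : (Fin n → ℝ) → Fin m → ℝ} (hφ : ContDiff ℝ ∞ φ) (j : ℕ) :
    ContDiff ℝ ∞ (uncurry fun s => lieIter (F s) φ j) := by
  induction j with
  | zero => exact hφ.comp contDiff_snd
  | succ j ih => exact contDiff_lieD_uncurry hF ih

lemma continuous_NOM (hF : ContDiff ℝ ∞ (uncurry F)) (C : Matrix (Fin m) (Fin n) ℝ)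
    (x : Fin n → ℝ) : Continuous fun s => NOM (F s) C x := by
  refine continuous_pi fun p => continuous_pi fun c => ?_
  have hcomp : ContDiff ℝ ∞ (uncurry fun s y => lieIter (F s) (fun z => C.mulVec z) p.1 y p.2) :=
    contDiff_pi.mp (contDiff_lieIter_uncurry hF (C.mulVecLin.toContinuousLinearMap.contDiff) _) p.2
  exact ((hcomp.fderiv (n := 0) contDiff_const (by simp)).continuous.clm_apply continuous_const)

end Parametric

lemma Matrix.rank_eq_card_iff_isUnit {K ι : Type*} [Field K] [Fintype ι] [DecidableEq ι]
    {A : Matrix ι ι K} : A.rank = Fintype.card ι ↔ IsUnit A := by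
  rw [← linearIndependent_cols_iff_isUnit, linearIndependent_iff_card_eq_finrank_span,
    rank_eq_finrank_span_cols, Set.finrank, eq_comm]

lemma Matrix.eventually_rank_eq_card_width {X ι κ : Type*} [TopologicalSpace X] [Fintype ι]
    [Fintype κ] [DecidableEq κ] {B : X → Matrix ι κ ℝ} {x₀ : X} (hB : ContinuousAt B x₀)
    (hx₀ : (B x₀).rank = Fintype.card κ) : ∀ᶠ x in 𝓝 x₀, (B x).rank = Fintype.card κ := by
  simp only [← rank_transpose_mul_self (B _), rank_eq_card_iff_isUnit, isUnit_iff_isUnit_det,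
    isUnit_iff_ne_zero] at hx₀ ⊢
  have hdet : Continuous fun M : Matrix ι κ ℝ => (Mᵀ * M).det :=
    (continuous_id.matrix_transpose.matrix_mul continuous_id).matrix_det
  exact (hdet.continuousAt.comp hB).eventually_ne hx₀

section ScaledField

variable {n : ℕ} (A : (k : ℕ) → Matrix (Fin n) (Fin (n ^ (k - 1))) ℝ) (K : ℕ)

def scaledField (s : ℝ) (y : Fin n → ℝ) : Fin n → ℝ :=
  ∑ k ∈ Finset.Icc 2 K, s ^ (K - k) • (A k).mulVec (vpow y (k - 1))

lemma contDiff_scaledField : ContDiff ℝ ∞ (uncurry (scaledField A K)) := by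
  change ContDiff ℝ ∞ fun p : ℝ × (Fin n → ℝ) =>
    ∑ k ∈ Finset.Icc 2 K, p.1 ^ (K - k) • (A k).mulVec (vpow p.2 (k - 1))
  refine ContDiff.sum fun k _ => ?_
  have hf : ContDiff ℝ ∞ fun p : ℝ × (Fin n → ℝ) => (A k).mulVec (vpow p.2 (k - 1)) :=
    (A k).mulVecLin.toContinuousLinearMap.contDiff.comp ((contDiff_vpow _).comp contDiff_snd)
  exact (contDiff_fst.pow _).smul hf

lemma scaledField_zero (hK : 2 ≤ K) :
    scaledField A K 0 = fun y => (A K).mulVec (vpow y (K - 1)) := by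
  funext y
  rw [scaledField, Finset.sum_eq_single_of_mem K (Finset.mem_Icc.mpr ⟨hK, le_rfl⟩)]
  · simp
  · intro k hk hkK
    have : 0 < K - k := by grind
    simp [zero_pow this.ne']

lemma scaledField_eq_smul {s : ℝ} (hs : s ≠ 0) (y : Fin n → ℝ) :
    scaledField A K s y =
      s ^ (K - 1) • ∑ k ∈ Finset.Icc 2 K, (A k).mulVec (vpow (s⁻¹ • y) (k - 1)) := by
  rw [scaledField, Finset.smul_sum]
  refine Finset.sum_congr rfl fun k hk => ?_
  obtain ⟨hk2, hkK⟩ := Finset.mem_Icc.mp hk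
  rw [vpow_smul, Matrix.mulVec_smul, smul_smul, inv_pow, ← pow_sub₀ _ hs (by omega)]
  congr 2
  omega

end ScaledField

/-- For `f_k(x) = A_k x^{[k-1]}` (`k = 2, …, K`, `K ≥ 2`),
`f = Σ_{k=2}^K f_k` and output matrix `C`: if the observability matrix of the
maximum-cardinality field `f_K` has rank `n` at some point, then the observability matrix of
`f` has rank `n` at some point (local weak observability of the full nonuniform hypergraph
follows from that of the top-cardinality uniform part). -/
theorem observable_of_top_cardinality_observable (n m K : ℕ) (hK : 2 ≤ K)
    (A : (k : ℕ) → Matrix (Fin n) (Fin (n ^ (k - 1))) ℝ)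
    (C : Matrix (Fin m) (Fin n) ℝ)
    (h : ∃ x : Fin n → ℝ, (NOM (fun y => (A K).mulVec (vpow y (K - 1))) C x).rank = n) :
    ∃ x : Fin n → ℝ,
      (NOM (fun y => ∑ k ∈ Finset.Icc 2 K, (A k).mulVec (vpow y (k - 1))) C x).rank = n := by
  obtain ⟨x, hx⟩ := h
  have hnear : ∀ᶠ s in 𝓝 0, (NOM (scaledField A K s) C x).rank = Fintype.card (Fin n) :=
    eventually_rank_eq_card_width (continuous_NOM (contDiff_scaledField A K) C x).continuousAt
      (by rwa [scaledField_zero A K hK, Fintype.card_fin])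
  obtain ⟨s, hrank, hs⟩ := (hnear.filter_mono nhdsWithin_le_nhds).and self_mem_nhdsWithin
    |>.exists (f := 𝓝[≠] (0 : ℝ))
  refine ⟨s⁻¹ • x, le_antisymm ((rank_le_card_width _).trans_eq (Fintype.card_fin n)) ?_⟩
  calc n = (NOM (scaledField A K s) C x).rank := by rw [hrank, Fintype.card_fin]
    _ ≤ _ := by
      rw [NOM_eq_diagonal_mul (f := fun y => ∑ k ∈ Finset.Icc 2 K, (A k).mulVec (vpow y (k - 1)))
        (inv_ne_zero hs) (scaledField_eq_smul A K hs) C x]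
      exact rank_mul_le_right _ _

end
end
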